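/- Let $\Lambda = \{1,\dots,N\}$ with periodic bonds. For $X \subseteq \Lambda$ define $w_N(X)$ as the minimum cardinality of a connected set $C$ of bonds (connected in the sense that bonds sharing an endpoint or at distance 1 are adjacent) that covers $X$ and contains at least one endpoint of the bond $\langle N, 1\rangle$. Then for any sets $Y, Z \subseteq \Lambda$ and any site $j$ with $j :: Z$ (exactly one of $j,j+1$ in $Z$ if $j\ne N$; both or neither of $N,1$ in $Z$ if $j=N$), one has $w_N((Y+j) \triangle Z) \le w_N(Y) + w_N(Z)$. -/

import Mathlib

open scoped Classical symmDiff

/-- Bonds of the cyclic lattice are indexed by their left endpoint: `j` stands for `⟨j, j+1⟩`.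
Two bonds are connected iff they share an endpoint or are at distance 1. -/
def bondAdj (N : ℕ) (p q : ZMod N) : Prop :=
  q = p ∨ q = p + 1 ∨ q = p + 2 ∨ p = q + 1 ∨ p = q + 2

/-- A set of bonds is connected if any two of its bonds are joined by a chain of
pairwise-connected bonds inside the set. -/
def connectedIn (N : ℕ) (C : Finset (ZMod N)) : Prop :=
  ∀ p ∈ C, ∀ q ∈ C, Relation.ReflTransGen (fun a b => a ∈ C ∧ b ∈ C ∧ bondAdj N a b) p q

/-- `C` covers `X`: every site of `X` is an endpoint of some bond of `C`. -/
def covers (N : ℕ) (C : Finset (ZMod N)) (X : Finset (ZMod N)) : Prop :=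
  ∀ x ∈ X, ∃ j ∈ C, x = j ∨ x = j + 1

/-- `C` intersects the bond `⟨N, 1⟩` (site `N` is `0` in `ZMod N`). -/
def touches (N : ℕ) (C : Finset (ZMod N)) : Prop :=
  ∃ j ∈ C, j = 0 ∨ j + 1 = 0 ∨ j = 1 ∨ j + 1 = 1

/-- `w_N(X)`: minimal cardinality of a connected bond set covering `X` and
intersecting the bond `⟨N,1⟩`. -/
noncomputable def wN (N : ℕ) (X : Finset (ZMod N)) : ℕ∞ :=
  sInf {c : ℕ∞ | ∃ C : Finset (ZMod N),
    connectedIn N C ∧ covers N C X ∧ touches N C ∧ (C.card : ℕ∞) = c}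

/-- `j : X` : the bond `⟨j, j+1⟩` has exactly one endpoint in `X`. -/
def bdry (N : ℕ) (X : Finset (ZMod N)) (j : ZMod N) : Prop :=
  (j ∈ X ∧ j + 1 ∉ X) ∨ (j + 1 ∈ X ∧ j ∉ X)

/-- `j :: X` : for `j ≠ N` this means `j : X`; for `j = N` (i.e. `j = 0`) it means
both or neither of `N, 1` lie in `X`. -/
def dbdry (N : ℕ) (X : Finset (ZMod N)) (j : ZMod N) : Prop :=
  if j = 0 then ¬ bdry N X j else bdry N X j

/-!
Take optimal bond sets `A` for `Y` and `B` for `Z`. Since `A` meets the bond `⟨N, 1⟩`, its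
translate `A + j` contains a bond meeting the bond `⟨j, j+1⟩`. So does `B`: for `j ≠ N` the
condition `j :: Z` puts an endpoint of `⟨j, j+1⟩` in `Z`, and for `j = N` this is the touching
condition of `B`. Two bonds meeting a common bond are adjacent, hence `(A + j) ∪ B` is connected;
it covers `(Y + j) ∪ Z ⊇ (Y + j) ∆ Z`, touches `⟨N, 1⟩` through `B`, and has at most
`|A| + |B|` bonds.
-/

open Finset

variable {N : ℕ}

/-- The bonds meeting an endpoint of the bond `⟨j, j+1⟩` are those indexed by `j - 1, j, j + 1`. -/
def sharesEndpoint (j c : ZMod N) : Prop :=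
  c = j - 1 ∨ c = j ∨ c = j + 1

lemma sharesEndpoint_add_right {j c : ZMod N} (h : sharesEndpoint j c) (k : ZMod N) :
    sharesEndpoint (j + k) (c + k) := by
  unfold sharesEndpoint at *
  rcases h with rfl | rfl | rfl
  · left; ring
  · right; left; rfl
  · right; right; ring

lemma bondAdj_of_sharesEndpoint {j p q : ZMod N} (hp : sharesEndpoint j p)
    (hq : sharesEndpoint j q) : bondAdj N p q := by
  unfold bondAdj
  rcases hp with rfl | rfl | rfl <;> rcases hq with rfl | rfl | rfl
  all_goals first
    | (left; ring1)
    | (right; left; ring1)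
    | (right; right; left; ring1)
    | (right; right; right; left; ring1)
    | (right; right; right; right; ring1)

lemma bondAdj_add_right {p q : ZMod N} (h : bondAdj N p q) (k : ZMod N) :
    bondAdj N (p + k) (q + k) := by
  unfold bondAdj at *
  rcases h with rfl | rfl | rfl | rfl | rfl
  · left; rfl
  · right; left; ring
  · right; right; left; ring
  · right; right; right; left; ring
  · right; right; right; right; ring

lemma touches_iff {C : Finset (ZMod N)} : touches N C ↔ ∃ c ∈ C, sharesEndpoint 0 c := by
  unfold touches sharesEndpoint
  refine exists_congr fun c => and_congr_right fun _ => ?_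
  constructor
  · rintro (h | h | h | h)
    · exact Or.inr (Or.inl h)
    · exact Or.inl (by linear_combination h)
    · exact Or.inr (Or.inr (by simpa using h))
    · exact Or.inr (Or.inl (by simpa using h))
  · rintro (h | h | h)
    · exact Or.inr (Or.inl (by simp [h]))
    · exact Or.inl h
    · exact Or.inr (Or.inr (Or.inl (by simpa using h)))

lemma touches.mono {C D : Finset (ZMod N)} (h : touches N C) (hCD : C ⊆ D) : touches N D :=
  let ⟨c, hc, hc0⟩ := h
  ⟨c, hCD hc, hc0⟩

lemma covers.mono {C X X' : Finset (ZMod N)} (h : covers N C X) (hX : X' ⊆ X) :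
    covers N C X' :=
  fun x hx => h x (hX hx)

lemma covers.union {C D X Y : Finset (ZMod N)} (hC : covers N C X) (hD : covers N D Y) :
    covers N (C ∪ D) (X ∪ Y) := by
  intro x hx
  rcases mem_union.1 hx with hx | hx
  · obtain ⟨c, hc, hxc⟩ := hC x hx
    exact ⟨c, mem_union_left _ hc, hxc⟩
  · obtain ⟨c, hc, hxc⟩ := hD x hx
    exact ⟨c, mem_union_right _ hc, hxc⟩

lemma covers_image_add_right {C X : Finset (ZMod N)} (h : covers N C X) (k : ZMod N) :
    covers N (C.image (· + k)) (X.image (· + k)) := by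
  simp only [covers, mem_image]
  rintro _ ⟨x, hx, rfl⟩
  obtain ⟨c, hc, hxc⟩ := h x hx
  refine ⟨c + k, ⟨c, hc, rfl⟩, ?_⟩
  rcases hxc with rfl | rfl
  · exact Or.inl rfl
  · exact Or.inr (by ring)

lemma covers.exists_sharesEndpoint {C X : Finset (ZMod N)} (h : covers N C X) {j : ZMod N}
    (hj : j ∈ X ∨ j + 1 ∈ X) : ∃ c ∈ C, sharesEndpoint j c := by
  rcases hj with hj | hj
  · obtain ⟨c, hc, hjc | hjc⟩ := h j hj
    · exact ⟨c, hc, Or.inr (Or.inl hjc.symm)⟩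
    · exact ⟨c, hc, Or.inl (by rw [hjc]; ring)⟩
  · obtain ⟨c, hc, hjc | hjc⟩ := h (j + 1) hj
    · exact ⟨c, hc, Or.inr (Or.inr hjc.symm)⟩
    · exact ⟨c, hc, Or.inr (Or.inl (add_right_cancel hjc).symm)⟩

lemma connectedIn_image_add_right {C : Finset (ZMod N)} (h : connectedIn N C) (k : ZMod N) :
    connectedIn N (C.image (· + k)) := by
  simp only [connectedIn, mem_image]
  rintro _ ⟨p, hp, rfl⟩ _ ⟨q, hq, rfl⟩
  refine (h p hp q hq).lift (· + k) fun a b hab => ?_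
  exact ⟨⟨a, hab.1, rfl⟩, ⟨b, hab.2.1, rfl⟩, bondAdj_add_right hab.2.2 k⟩

lemma connectedIn_union_of_bondAdj {C D : Finset (ZMod N)} (hC : connectedIn N C)
    (hD : connectedIn N D) {c d : ZMod N} (hc : c ∈ C) (hd : d ∈ D) (hcd : bondAdj N c d) :
    connectedIn N (C ∪ D) := by
  let R := fun a b => a ∈ C ∪ D ∧ b ∈ C ∪ D ∧ bondAdj N a b
  have lift_of_subset {S : Finset (ZMod N)} (hS : S ⊆ C ∪ D) {p q : ZMod N}
      (h : Relation.ReflTransGen (fun a b => a ∈ S ∧ b ∈ S ∧ bondAdj N a b) p q) :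
      Relation.ReflTransGen R p q :=
    Relation.ReflTransGen.mono (fun a b hab => ⟨hS hab.1, hS hab.2.1, hab.2.2⟩) p q h
  have hcd' : R c d := ⟨mem_union_left _ hc, mem_union_right _ hd, hcd⟩
  have hdc : R d c := ⟨hcd'.2.1, hcd'.1, by unfold bondAdj at hcd ⊢; tauto⟩
  have to_c : ∀ p ∈ C ∪ D, Relation.ReflTransGen R p c := by
    intro p hp
    rcases mem_union.1 hp with hp | hp
    · exact lift_of_subset subset_union_left (hC p hp c hc)
    · exact (lift_of_subset subset_union_right (hD p hp d hd)).tail hdc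
  have from_c : ∀ q ∈ C ∪ D, Relation.ReflTransGen R c q := by
    intro q hq
    rcases mem_union.1 hq with hq | hq
    · exact lift_of_subset subset_union_left (hC c hc q hq)
    · exact .head hcd' (lift_of_subset subset_union_right (hD d hd q hq))
  exact fun p hp q hq => (to_c p hp).trans (from_c q hq)

lemma wN_le_card {X C : Finset (ZMod N)} (hc : connectedIn N C) (hX : covers N C X)
    (ht : touches N C) : wN N X ≤ C.card :=
  sInf_le ⟨C, hc, hX, ht, rfl⟩

lemma exists_card_eq_wN {X : Finset (ZMod N)} (h : wN N X ≠ ⊤) :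
    ∃ C : Finset (ZMod N), connectedIn N C ∧ covers N C X ∧ touches N C ∧
      (C.card : ℕ∞) = wN N X := by
  have hne : {c : ℕ∞ | ∃ C : Finset (ZMod N),
      connectedIn N C ∧ covers N C X ∧ touches N C ∧ (C.card : ℕ∞) = c}.Nonempty :=
    Set.nonempty_iff_ne_empty.2 fun hempty => h (by rw [wN, hempty, sInf_empty])
  exact csInf_mem hne

lemma exists_sharesEndpoint_of_dbdry {C Z : Finset (ZMod N)} (hC : covers N C Z)
    (ht : touches N C) {j : ZMod N} (hj : dbdry N Z j) : ∃ c ∈ C, sharesEndpoint j c := by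
  by_cases hj0 : j = 0
  · exact hj0 ▸ touches_iff.1 ht
  · rw [dbdry, if_neg hj0] at hj
    exact hC.exists_sharesEndpoint (hj.imp And.left And.left)

theorem stmt_7_general (N : ℕ) (Y Z : Finset (ZMod N)) (j : ZMod N)
    (hj : dbdry N Z j) :
    wN N ((Y.image (· + j)) ∆ Z) ≤ wN N Y + wN N Z := by
  rcases eq_or_ne (wN N Y) ⊤ with hY | hY
  · simp [hY]
  rcases eq_or_ne (wN N Z) ⊤ with hZ | hZ
  · simp [hZ]
  obtain ⟨A, hAc, hAcov, hAt, hA⟩ := exists_card_eq_wN hY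
  obtain ⟨B, hBc, hBcov, hBt, hB⟩ := exists_card_eq_wN hZ
  obtain ⟨a, ha, ha0⟩ := touches_iff.1 hAt
  obtain ⟨b, hb, hbj⟩ := exists_sharesEndpoint_of_dbdry hBcov hBt hj
  have hab : bondAdj N (a + j) b :=
    bondAdj_of_sharesEndpoint (by simpa using sharesEndpoint_add_right ha0 j) hbj
  calc wN N ((Y.image (· + j)) ∆ Z) ≤ (A.image (· + j) ∪ B).card :=
        wN_le_card
          (connectedIn_union_of_bondAdj (connectedIn_image_add_right hAc j) hBc
            (mem_image_of_mem _ ha) hb hab)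
          (((covers_image_add_right hAcov j).union hBcov).mono symmDiff_le_sup)
          (hBt.mono subset_union_right)
    _ ≤ A.card + B.card := by
        rw [← card_image_of_injective A (add_left_injective j)]
        exact_mod_cast card_union_le _ _
    _ = wN N Y + wN N Z := by rw [hA, hB]

theorem stmt_7 (N : ℕ) [NeZero N] (Y Z : Finset (ZMod N)) (j : ZMod N)
    (hj : dbdry N Z j) :
    wN N ((Y.image (· + j)) ∆ Z) ≤ wN N Y + wN N Z :=
  stmt_7_general N Y Z j hj
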